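/- For every finite-dimensional poset P, abs(P) ≤ dim(P) − bd-dim(P). -/

import Mathlib

universe u

/-- The order dimension of a poset: the least cardinal `κ` such that the partial
order is the intersection of `κ` linear orderings (each extending it). -/
noncomputable def orderDim (α : Type u) [PartialOrder α] : Cardinal.{u} :=
  sInf {κ : Cardinal.{u} | ∃ (ι : Type u) (r : ι → α → α → Prop),
    (∀ i, IsLinearOrder α (r i)) ∧
    (∀ x y : α, x ≤ y ↔ ∀ i, r i x y) ∧
    Cardinal.mk ι = κ}

/-- The absorbency of a (finite-dimensional) poset `P`: the largest natural
number `n` such that taking the product of `P` with any `n`-tuple of (nonempty)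
chains does not change the dimension. -/
noncomputable def absorb (P : Type u) [PartialOrder P] : ℕ :=
  sSup {n : ℕ | ∀ (T : Fin n → Type u) [∀ i, LinearOrder (T i)] [∀ i, Nonempty (T i)],
    orderDim (P × ∀ i, T i) = orderDim P}

/-- The bounded dimension of a (finite-dimensional) poset `P`: the greatest
natural number `n` such that some bounded subposet of `P` (equivalently, some
nonempty interval `[p, p']`) has dimension `n`. -/
noncomputable def bdDim (P : Type u) [PartialOrder P] : ℕ :=
  sSup {n : ℕ | ∃ p p' : P, p ≤ p' ∧ orderDim ↥(Set.Icc p p') = n}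

/-!
For bounded posets `A` and `B`, `dim A + dim B ≤ dim (A × B)`: in a realizer of `A × B`, no linear
extension can put both some `(a, ⊤)` below some `(a', ⊥)` and some `(⊤, b)` below some `(⊥, b')`,
while the extensions of the first kind restrict to a realizer of `A` and those of the second kind
to a realizer of `B`. Iterating with a two-element chain gives `dim I + n ≤ dim (I × 2ⁿ)` for every
interval `I = [p, p']` of `P`. As `I × 2ⁿ` embeds in `P × 2ⁿ`, a poset absorbing `n` chains has
`bdDim P + n ≤ dim P`.
-/

open Cardinal Set

def OrderEmbedding.prodMap {α β γ δ : Type*} [PartialOrder α] [Preorder β] [PartialOrder γ]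
    [Preorder δ] (f : α ↪o β) (g : γ ↪o δ) : α × γ ↪o β × δ :=
  OrderEmbedding.ofMapLEIff (Prod.map f g) fun _ _ => by simp [Prod.le_def]

section Realizer

variable {α β : Type u} [PartialOrder α] [PartialOrder β]

structure IsRealizer {ι : Type*} (r : ι → α → α → Prop) : Prop where
  isLinearOrder : ∀ i, IsLinearOrder α (r i)
  le_iff : ∀ x y : α, x ≤ y ↔ ∀ i, r i x y

theorem exists_isLinearOrder_not_rel_of_not_le {x y : α} (h : ¬ x ≤ y) :
    ∃ s : α → α → Prop, IsLinearOrder α s ∧ (∀ a b : α, a ≤ b → s a b) ∧ ¬ s x y := by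
  -- adjoin `y < x`; this keeps a partial order because `x ≰ y`
  let r : α → α → Prop := fun a b => a ≤ b ∨ (a ≤ y ∧ x ≤ b)
  have : IsPartialOrder α r :=
    { refl := fun a => .inl le_rfl
      trans := by
        rintro a b c (hab | ⟨hay, hxb⟩) (hbc | ⟨hby, hxc⟩)
        · exact .inl (hab.trans hbc)
        · exact .inr ⟨hab.trans hby, hxc⟩
        · exact .inr ⟨hay, hxb.trans hbc⟩
        · exact absurd (hxb.trans hby) h
      antisymm := by
        rintro a b (hab | ⟨hay, hxb⟩) (hba | ⟨hby, hxa⟩)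
        · exact le_antisymm hab hba
        · exact absurd ((hxa.trans hab).trans hby) h
        · exact absurd ((hxb.trans hba).trans hay) h
        · exact absurd (hxa.trans hay) h }
  obtain ⟨s, hs, hrs⟩ := extend_partialOrder r
  refine ⟨s, hs, fun a b hab => hrs _ _ (.inl hab), fun hxy => h ?_⟩
  have hyx : s y x := hrs _ _ (.inr ⟨le_rfl, le_rfl⟩)
  exact (antisymm hxy hyx : x = y) ▸ le_rfl

theorem isRealizer_linearExtensions :
    IsRealizer fun s : {s : α → α → Prop // IsLinearOrder α s ∧ ∀ a b : α, a ≤ b → s a b} =>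
      s.1 where
  isLinearOrder s := s.2.1
  le_iff x y := by
    refine ⟨fun hxy s => s.2.2 x y hxy, fun hall => by_contra fun hxy => ?_⟩
    obtain ⟨s, hs, hle, hsxy⟩ := exists_isLinearOrder_not_rel_of_not_le hxy
    exact hsxy (hall ⟨s, hs, hle⟩)

theorem exists_isRealizer_mk_eq_orderDim (α : Type u) [PartialOrder α] :
    ∃ (ι : Type u) (r : ι → α → α → Prop), IsRealizer r ∧ #ι = orderDim α := by
  obtain ⟨ι, r, hlin, hle, hι⟩ := csInf_mem (s := {κ : Cardinal.{u} | ∃ (ι : Type u)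
    (r : ι → α → α → Prop), (∀ i, IsLinearOrder α (r i)) ∧ (∀ x y : α, x ≤ y ↔ ∀ i, r i x y) ∧
      #ι = κ}) ⟨_, _, _, isRealizer_linearExtensions.1, isRealizer_linearExtensions.2, rfl⟩
  exact ⟨ι, r, ⟨hlin, hle⟩, hι⟩

theorem IsRealizer.orderDim_le_mk {ι : Type u} {r : ι → α → α → Prop} (hr : IsRealizer r) :
    orderDim α ≤ #ι :=
  csInf_le (OrderBot.bddBelow _) ⟨ι, r, hr.1, hr.2, rfl⟩

theorem IsRealizer.comap {ι : Type*} {r : ι → β → β → Prop} (hr : IsRealizer r) (f : α ↪o β) :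
    IsRealizer fun i a a' => r i (f a) (f a') where
  isLinearOrder i :=
    have := hr.isLinearOrder i
    (RelEmbedding.preimage f.toEmbedding (r i)).isLinearOrder
  le_iff x y := by rw [← f.le_iff_le, hr.le_iff]

theorem orderDim_le_of_orderEmbedding (f : α ↪o β) : orderDim α ≤ orderDim β := by
  obtain ⟨ι, r, hr, hι⟩ := exists_isRealizer_mk_eq_orderDim β
  exact hι ▸ (hr.comap f).orderDim_le_mk

theorem orderDim_eq_zero [Subsingleton α] : orderDim α = 0 :=
  nonpos_iff_eq_zero.1 <| mk_eq_zero PEmpty.{u + 1} ▸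
    IsRealizer.orderDim_le_mk (r := fun i => i.elim)
      ⟨fun i => i.elim, fun x y => by simp [Subsingleton.elim x y]⟩

theorem one_le_orderDim [Nontrivial α] : 1 ≤ orderDim α := by
  obtain ⟨x, y, hxy⟩ := exists_pair_ne α
  wlog h : ¬ x ≤ y generalizing x y
  · exact this y x hxy.symm fun hyx => hxy (le_antisymm (not_not.1 h) hyx)
  obtain ⟨ι, r, hr, hι⟩ := exists_isRealizer_mk_eq_orderDim α
  rw [← hι, Cardinal.one_le_iff_ne_zero, mk_ne_zero_iff]
  by_contra! hempty
  exact h ((hr.le_iff x y).2 hempty.elim)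

end Realizer

section Product

variable {A B : Type u} [PartialOrder A] [PartialOrder B]

theorem IsRealizer.orderDim_le_mk_setOf_not_rel [OrderBot B] [OrderTop B] {ι : Type u}
    {r : ι → A × B → A × B → Prop} (hr : IsRealizer r) :
    orderDim A ≤ #{i | ∃ a a' : A, ¬ r i (a', ⊥) (a, ⊤)} := by
  let f : A ↪o A × B := OrderEmbedding.ofMapLEIff (fun a => (a, ⊥)) fun _ _ => by simp
  refine IsRealizer.orderDim_le_mk ⟨fun i => (hr.comap f).isLinearOrder i, fun x y =>
    ⟨fun hxy i => (hr.comap f).le_iff x y |>.1 hxy i, fun hall => by_contra fun hxy => ?_⟩⟩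
  obtain ⟨i, hi⟩ : ∃ i, ¬ r i (x, ⊥) (y, ⊤) := by
    have : ¬ ((x, ⊥) : A × B) ≤ (y, ⊤) := by simpa [Prod.le_def] using hxy
    simpa [hr.le_iff] using this
  have := hr.isLinearOrder i
  exact hi <| _root_.trans (hall ⟨i, y, x, hi⟩) ((hr.le_iff _ _).1 (by simp [f, Prod.le_def]) i)

theorem IsRealizer.rel_of_not_rel [BoundedOrder A] [BoundedOrder B]
    {ι : Type*} {r : ι → A × B → A × B → Prop} (hr : IsRealizer r) (i : ι) {a a' : A}
    (ha : ¬ r i (a', ⊥) (a, ⊤)) (b b' : B) : r i (⊥, b') (⊤, b) := by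
  have := hr.isLinearOrder i
  have hle : ∀ {p q : A × B}, p ≤ q → r i p q := fun h => (hr.le_iff _ _).1 h i
  exact _root_.trans (_root_.trans (hle (by simp [Prod.le_def]) : r i (⊥, b') (a, ⊤))
    ((total_of (r i) _ _).resolve_right ha)) (hle (by simp [Prod.le_def]))

theorem orderDim_add_orderDim_le_orderDim_prod [BoundedOrder A] [BoundedOrder B] :
    orderDim A + orderDim B ≤ orderDim (A × B) := by
  obtain ⟨ι, r, hr, hι⟩ := exists_isRealizer_mk_eq_orderDim (A × B)
  have hB : orderDim B ≤ #{i | ∃ b b' : B, ¬ r i (⊥, b') (⊤, b)} :=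
    (hr.comap (OrderIso.prodComm (α := B) (β := A)).toOrderEmbedding).orderDim_le_mk_setOf_not_rel
  have hdisj : Disjoint {i | ∃ a a' : A, ¬ r i (a', ⊥) (a, ⊤)}
      {i | ∃ b b' : B, ¬ r i (⊥, b') (⊤, b)} :=
    disjoint_left.2 fun i ⟨_, _, ha⟩ ⟨_, _, hb⟩ => hb (hr.rel_of_not_rel i ha _ _)
  calc orderDim A + orderDim B ≤ _ + _ := add_le_add hr.orderDim_le_mk_setOf_not_rel hB
    _ = _ := (mk_union_of_disjoint hdisj).symm
    _ ≤ #ι := mk_set_le _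
    _ = _ := hι

theorem orderDim_add_le_orderDim_prod_pi [BoundedOrder A] (T : Type u) [PartialOrder T]
    [BoundedOrder T] [Nontrivial T] (n : ℕ) : orderDim A + n ≤ orderDim (A × (Fin n → T)) := by
  induction n generalizing A with
  | zero =>
    let f : A ↪o A × (Fin 0 → T) :=
      OrderEmbedding.ofMapLEIff (fun a => (a, finZeroElim)) fun _ _ => by simp [Prod.le_def]
    simpa using orderDim_le_of_orderEmbedding f
  | succ n ih =>
    calc orderDim A + (n + 1 : ℕ) = orderDim A + 1 + n := by push_cast; ring
      _ ≤ orderDim A + orderDim T + n := by gcongr; exact one_le_orderDim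
      _ ≤ orderDim (A × T) + n := by gcongr; exact orderDim_add_orderDim_le_orderDim_prod
      _ ≤ orderDim ((A × T) × (Fin n → T)) := ih
      _ ≤ orderDim (A × (Fin (n + 1) → T)) := orderDim_le_of_orderEmbedding <|
          (OrderIso.prodAssoc A T (Fin n → T)).toOrderEmbedding.trans <|
            OrderEmbedding.prodMap (RelEmbedding.refl _)
              (Fin.consOrderIso fun _ => T).toOrderEmbedding

end Product

theorem exists_orderDim_Icc_eq_bdDim (P : Type u) [PartialOrder P] [Nonempty P] {d : ℕ}
    (hd : orderDim P = d) : ∃ p p' : P, p ≤ p' ∧ orderDim (Icc p p') = bdDim P := by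
  refine Nat.sSup_mem (s := {n : ℕ | ∃ p p' : P, p ≤ p' ∧ orderDim (Icc p p') = n}) ?_ ⟨d, ?_⟩
  · obtain ⟨p⟩ := ‹Nonempty P›
    have : Subsingleton (Icc p p) := by simp [Icc_self]
    exact ⟨0, p, p, le_rfl, by simpa using orderDim_eq_zero⟩
  · rintro n ⟨p, p', -, hn⟩
    have := orderDim_le_of_orderEmbedding (OrderEmbedding.subtype (· ∈ Icc p p'))
    rw [hn, hd] at this
    exact_mod_cast this

theorem stmt17 (P : Type u) [PartialOrder P] [Nonempty P]
    (dP : ℕ) (hdP : orderDim P = dP) :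
    absorb P ≤ dP - bdDim P := by
  obtain ⟨p, p', hpp', hbd⟩ := exists_orderDim_Icc_eq_bdDim P hdP
  have : Fact (p ≤ p') := ⟨hpp'⟩
  refine csSup_le' fun n hn => ?_
  have hsum : ((bdDim P + n : ℕ) : Cardinal) ≤ dP := calc
    _ = orderDim (Icc p p') + n := by push_cast; rw [hbd]
    _ ≤ orderDim (Icc p p' × (Fin n → ULift.{u} Bool)) := orderDim_add_le_orderDim_prod_pi _ n
    _ ≤ orderDim (P × (Fin n → ULift.{u} Bool)) := orderDim_le_of_orderEmbedding <|
        (OrderEmbedding.subtype _).prodMap (RelEmbedding.refl _)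
    _ = dP := (hn fun _ => ULift Bool).trans hdP
  have := Nat.cast_le.1 hsum
  omega
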